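/- Let m ≥ 2 and n ≥ 1 be integers and let ν ↦ A_ν be a linear Hermitian family of 2n×2n matrices such that all eigenvalues of A_ν are nonzero for every ν ≠ 0. For 0 < r < 1 and ν ≠ 0 let μ_1^ν,…,μ_{2n}^ν denote the eigenvalues of A_ν counted with multiplicity, and define B(r,ν) = ∏_{j=1}^{2n} μ_j^ν · r^{μ_j^ν} / (1 − r^{μ_j^ν}) (equivalently B(r,ν) = det(f_r(A_ν)) with f_r(u) = u r^u/(1 − r^u) applied via the spectral functional calculus, so B is well defined independently of the ordering of the eigenvalues). Then B is real analytic on the open set {(r,ν) ∈ ℝ × ℝ^m : 0 < r < 1, ν ≠ 0}, jointly in (r,ν). -/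

import Mathlib

/-!
The eigenvalues of `A ν` need not depend analytically on `ν`, so `B` is rewritten through matrix
functions of `A ν`. For `r > 0` write `r ^ μ = exp (μ log r)`; the spectral functional calculus
then gives `B(r, ν) = det (A exp (log r • A)) / det (1 - exp (log r • A))` with `A = A ν`, a
quotient of determinants of matrices depending analytically on `(r, ν)`. The denominator is
`∏ⱼ (1 - r ^ μⱼ)`, which is nonzero when `r ≠ 1` and no eigenvalue vanishes.
-/

/-- The factor `B(r,ν) = ∏ⱼ μⱼ^ν · r^{μⱼ^ν} / (1 − r^{μⱼ^ν})`, where `μ₁^ν, …, μ_{2n}^ν` are the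
eigenvalues of the Hermitian matrix `A ν` counted with multiplicity (here `r ^ u` is the real
power `Real.rpow`).  It is well defined independently of the ordering of the eigenvalues. -/
noncomputable def Bfun {m N : ℕ}
    (A : EuclideanSpace ℝ (Fin m) →ₗ[ℝ] Matrix (Fin N) (Fin N) ℂ)
    (hHerm : ∀ ν, (A ν).IsHermitian) :
    ℝ × EuclideanSpace ℝ (Fin m) → ℝ := fun p =>
  ∏ j : Fin N,
    ((hHerm p.2).eigenvalues j * p.1 ^ ((hHerm p.2).eigenvalues j) /
      (1 - p.1 ^ ((hHerm p.2).eigenvalues j)))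

-- With the L2 operator norm `Matrix n n ℂ` is a C⋆-algebra, so `exp` is computed by the `cfc`.
open scoped Matrix.Norms.L2Operator

theorem Matrix.analyticAt_det {n : Type*} [Fintype n] [DecidableEq n] (M : Matrix n n ℂ) :
    AnalyticAt ℝ det M := by
  have entry (i j : n) : AnalyticAt ℝ (fun M : Matrix n n ℂ => M i j) M :=
    (entryLinearMap ℝ ℂ i j).toContinuousLinearMap.analyticAt M
  simp_rw [funext det_apply']
  exact Finset.analyticAt_fun_sum _ fun σ _ =>
    analyticAt_const.mul (Finset.analyticAt_fun_prod _ fun i _ => entry (σ i) i)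

namespace Matrix.IsHermitian

variable {n : Type*} [Fintype n] [DecidableEq n]

lemma det_cfc {𝕜 : Type*} [RCLike 𝕜] {A : Matrix n n 𝕜} (hA : A.IsHermitian) (f : ℝ → ℝ) :
    (cfc f A).det = ∏ i, (f (hA.eigenvalues i) : 𝕜) := by
  rw [hA.cfc_eq, IsHermitian.cfc, Unitary.conjStarAlgAut_apply, det_mul_comm, ← mul_assoc]
  simp

variable {A : Matrix n n ℂ}

lemma exp_smul_eq_cfc (hA : A.IsHermitian) (t : ℝ) :
    NormedSpace.exp (t • A) = cfc (fun u => Real.exp (t * u)) A := by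
  rw [← CFC.real_exp_eq_normedSpace_exp (IsSelfAdjoint.smul (star_trivial t) hA.isSelfAdjoint)]
  exact (cfc_comp_smul t Real.exp A).symm

lemma det_mul_exp_smul (hA : A.IsHermitian) (t : ℝ) :
    (A * NormedSpace.exp (t • A)).det =
      ((∏ i, hA.eigenvalues i * Real.exp (t * hA.eigenvalues i) : ℝ) : ℂ) := by
  rw [det_mul, hA.exp_smul_eq_cfc, hA.det_cfc, hA.det_eq_prod_eigenvalues,
    ← Finset.prod_mul_distrib, Complex.ofReal_prod]
  simp only [Complex.ofReal_mul]
  rfl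

lemma det_one_sub_exp_smul (hA : A.IsHermitian) (t : ℝ) :
    (1 - NormedSpace.exp (t • A)).det =
      ((∏ i, (1 - Real.exp (t * hA.eigenvalues i)) : ℝ) : ℂ) := by
  rw [hA.exp_smul_eq_cfc, ← cfc_one ℝ A, ← cfc_sub .., hA.det_cfc, Complex.ofReal_prod]
  rfl

lemma det_one_sub_exp_smul_ne_zero (hA : A.IsHermitian) {t : ℝ} (ht : t ≠ 0)
    (hμ : ∀ i, hA.eigenvalues i ≠ 0) : (1 - NormedSpace.exp (t • A)).det ≠ 0 := by
  rw [hA.det_one_sub_exp_smul, Complex.ofReal_ne_zero, Finset.prod_ne_zero_iff]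
  intro i _
  rw [sub_ne_zero, ne_comm, Ne, Real.exp_eq_one_iff]
  exact mul_ne_zero ht (hμ i)

end Matrix.IsHermitian

lemma Bfun_eq_re_det_div_det {m N : ℕ}
    (A : EuclideanSpace ℝ (Fin m) →ₗ[ℝ] Matrix (Fin N) (Fin N) ℂ)
    (hHerm : ∀ ν, (A ν).IsHermitian) {r : ℝ} (hr : 0 < r) (ν : EuclideanSpace ℝ (Fin m)) :
    Bfun A hHerm (r, ν) =
      ((A ν * NormedSpace.exp (Real.log r • A ν)).det /
        (1 - NormedSpace.exp (Real.log r • A ν)).det).re := by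
  rw [(hHerm ν).det_mul_exp_smul, (hHerm ν).det_one_sub_exp_smul, ← Complex.ofReal_div,
    Complex.ofReal_re, ← Finset.prod_div_distrib]
  simp only [Bfun, Real.rpow_def_of_pos hr, mul_comm (Real.log r)]

theorem statement_3 (m n : ℕ)
    (A : EuclideanSpace ℝ (Fin m) →ₗ[ℝ] Matrix (Fin (2 * n)) (Fin (2 * n)) ℂ)
    (hHerm : ∀ ν, (A ν).IsHermitian)
    (hev : ∀ ν : EuclideanSpace ℝ (Fin m), ν ≠ 0 → ∀ j, (hHerm ν).eigenvalues j ≠ 0) :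
    AnalyticOnNhd ℝ (Bfun A hHerm)
      {p : ℝ × EuclideanSpace ℝ (Fin m) | 0 < p.1 ∧ p.1 < 1 ∧ p.2 ≠ 0} := by
  rintro ⟨r, ν⟩ ⟨hr0, hr1, hν⟩
  have hA : AnalyticAt ℝ (fun q : ℝ × EuclideanSpace ℝ (Fin m) => A q.2) (r, ν) :=
    ((LinearMap.toContinuousLinearMap A).analyticAt _).comp analyticAt_snd
  have hexp : AnalyticAt ℝ
      (fun q : ℝ × EuclideanSpace ℝ (Fin m) => NormedSpace.exp (Real.log q.1 • A q.2)) (r, ν) :=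
    (NormedSpace.exp_analytic _).comp (((analyticAt_log hr0).comp analyticAt_fst).smul hA)
  have hden : (1 - NormedSpace.exp (Real.log r • A ν)).det ≠ 0 :=
    (hHerm ν).det_one_sub_exp_smul_ne_zero (Real.log_neg hr0 hr1).ne (hev ν hν)
  have hquot := (Complex.reCLM.analyticAt _).comp
    (((Matrix.analyticAt_det _).comp (hA.mul hexp)).div
      ((Matrix.analyticAt_det _).comp (analyticAt_const.sub hexp)) hden)
  refine hquot.congr (Filter.eventually_of_mem
    ((isOpen_lt continuous_const continuous_fst).mem_nhds hr0) fun q hq => ?_)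
  exact (Bfun_eq_re_det_div_det A hHerm hq q.2).symm
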